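/- arXiv:1804.01369 — 3 statements merged into one kernel-verified Lean document; each statement's English description precedes it below -/
import Mathlib

section
/- Let p ≥ 2 be an integer. There exists a continuous (atomless) Borel probability measure μ on 𝕋 such that inf_{k≥0} |μ̂(p^k)| > 0. -/
open MeasureTheory Filter Topology

noncomputable instance : MeasurableSpace Circle := borel Circle
instance : BorelSpace Circle := ⟨rfl⟩

/-- Fourier coefficient `μ̂(n) = ∫ λ^n dμ(λ)` of a measure on the circle. -/
noncomputable def fc (μ : Measure Circle) (n : ℤ) : ℂ := ∫ z : Circle, (z : ℂ) ^ n ∂μ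

/-!
Take `q = p³` and let `μ` be the law of `exp (2πi X)`, where `X = ∑ ωᵢ q^{-(i+1)}` has
independent digits `ωᵢ ∈ {0, 1}` equal to `0` with probability `3/4`. Since
`q X = ω₀ + X ∘ shift` and the shift preserves the law of the digits, `μ` is invariant under
`z ↦ z ^ q`, so `μ̂ (q n) = μ̂ n` and it suffices to bound `μ̂ m` for `m ≤ q`. Its real part
`E cos (2π m X)` is at least `1/8`: on `{ω₀ = 0}` the angle is at most `2π / (q - 1) ≤ 1`.
In base `q ≥ 3`, digits in `{0, 1}` are determined by `X`, and `X ≤ 1/2`; so `ω ↦ exp (2πi X)`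
is injective and `μ` has no atoms because the product measure has none.
-/

open Real

section FourierCoefficient

variable {Ω : Type*} [MeasurableSpace Ω] {μ : Measure Circle}

lemma Circle.continuous_coe_zpow (n : ℤ) : Continuous fun z : Circle => (z : ℂ) ^ n :=
  continuous_subtype_val.zpow₀ n fun z => .inl (Circle.coe_ne_zero z)

lemma fc_map {P : Measure Ω} {F : Ω → Circle} (hF : Measurable F) (n : ℤ) :
    fc (P.map F) n = ∫ ω, (F ω : ℂ) ^ n ∂P :=
  integral_map hF.aemeasurable (Circle.continuous_coe_zpow n).aestronglyMeasurable

lemma fc_natCast_mul_of_map_pow_eq {q : ℕ} (h : μ.map (· ^ q) = μ) (n : ℤ) :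
    fc μ (q * n) = fc μ n := by
  conv_rhs => rw [← h, fc_map (continuous_pow q).measurable]
  simp only [fc, Circle.coe_pow, zpow_mul, zpow_natCast]

lemma fc_pow_mul_of_map_pow_eq {q : ℕ} (h : μ.map (· ^ q) = μ) (j : ℕ) (n : ℤ) :
    fc μ ((q : ℤ) ^ j * n) = fc μ n := by
  induction j with
  | zero => simp
  | succ j ih => rw [pow_succ', mul_assoc, fc_natCast_mul_of_map_pow_eq h, ih]

lemma map_pow_map_eq_of_pow_eq_comp {P : Measure Ω} {T : Ω → Ω} {F : Ω → Circle} {q : ℕ}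
    (hT : MeasurePreserving T P P) (hF : Measurable F) (h : ∀ ω, F ω ^ q = F (T ω)) :
    (P.map F).map (· ^ q) = P.map F := by
  rw [Measure.map_map (continuous_pow q).measurable hF, show (· ^ q) ∘ F = F ∘ T from funext h,
    ← Measure.map_map hF hT.measurable, hT.map_eq]

end FourierCoefficient

section InfiniteProduct

variable {α : Type*} [MeasurableSpace α] (ν : Measure α) [IsProbabilityMeasure ν]

lemma measurePreserving_shift_infinitePi :
    MeasurePreserving (fun (ω : ℕ → α) i => ω (i + 1))
      (Measure.infinitePi fun _ => ν) (Measure.infinitePi fun _ => ν) := by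
  refine ⟨by fun_prop, Measure.eq_infinitePi _ fun s t ht => ?_⟩
  have hpre : (fun (ω : ℕ → α) i => ω (i + 1)) ⁻¹' (s : Set ℕ).pi t
      = ((s.map (addRightEmbedding 1) : Finset ℕ) : Set ℕ).pi fun j => t (j - 1) := by
    ext ω
    simp
  rw [Measure.map_apply (by fun_prop) (.pi s.countable_toSet fun i _ => ht i), hpre,
    Measure.infinitePi_pi _ fun j _ => ht _, Finset.prod_map]
  simp

lemma nullSingletonClass_infinitePi [MeasurableSingletonClass α] {c : ENNReal} (hc : c < 1)
    (hν : ∀ a, ν {a} ≤ c) : NullSingletonClass (Measure.infinitePi fun _ : ℕ => ν) := by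
  refine ⟨fun ω => nonpos_iff_eq_zero.1 <|
    ge_of_tendsto' (ENNReal.tendsto_pow_atTop_nhds_zero_of_lt_one hc) fun n => ?_⟩
  calc Measure.infinitePi (fun _ => ν) {ω}
      ≤ Measure.infinitePi (fun _ => ν) ((Finset.range n : Set ℕ).pi fun i => {ω i}) :=
        measure_mono fun ω' h i _ => h ▸ rfl
    _ = ∏ i ∈ Finset.range n, ν {ω i} :=
        Measure.infinitePi_pi _ fun i _ => measurableSet_singleton _
    _ ≤ c ^ n := by
        simpa using Finset.prod_le_prod' (s := Finset.range n) fun i _ => hν (ω i)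

end InfiniteProduct

namespace Real

variable {b : ℕ}

lemma ofDigits_eq_div (x : ℕ → Fin b) :
    ofDigits x = (x 0 + ofDigits fun i => x (i + 1)) / b := by
  rw [ofDigits_eq_sum_add_ofDigits x 1]
  simp [ofDigitsTerm, div_eq_inv_mul, mul_add, mul_comm]

lemma ofDigits_le_inv_of_le_one (hb : 2 ≤ b) {x : ℕ → Fin b} (hx : ∀ i, (x i : ℕ) ≤ 1) :
    ofDigits x ≤ ((b : ℝ) - 1)⁻¹ := by
  have hb1 : (0 : ℝ) < b - 1 := by
    have : (2 : ℝ) ≤ b := by exact_mod_cast hb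
    linarith
  set top : ℕ → Fin b := fun _ => ⟨b - 1, Nat.sub_one_lt_of_lt hb⟩
  calc ofDigits x ≤ ∑' i, ofDigitsTerm top i / (b - 1) := by
        refine Summable.tsum_mono summable_ofDigitsTerm
          (summable_ofDigitsTerm.div_const _) fun i => ?_
        rw [ofDigitsTerm, ofDigitsTerm, mul_div_right_comm]
        gcongr
        rw [show ((top i : ℕ) : ℝ) = b - 1 by simp [top, Nat.cast_sub (by omega : 1 ≤ b)],
          div_self hb1.ne']
        exact Nat.cast_le_one.2 (hx i)
    _ = ((b : ℝ) - 1)⁻¹ := by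
        rw [tsum_div_const, show ∑' i, ofDigitsTerm top i = 1 from
          ofDigits_const_last_eq_one' (by omega), one_div]

lemma head_eq_and_ofDigits_tail_eq_of_ofDigits_eq (hb : 3 ≤ b) {x y : ℕ → Fin b}
    (hx : ∀ i, (x i : ℕ) ≤ 1) (hy : ∀ i, (y i : ℕ) ≤ 1) (h : ofDigits x = ofDigits y) :
    x 0 = y 0 ∧ (ofDigits fun i => x (i + 1)) = ofDigits fun i => y (i + 1) := by
  have hb' : (3 : ℝ) ≤ b := by exact_mod_cast hb
  have half : ((b : ℝ) - 1)⁻¹ ≤ 1 / 2 := by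
    rw [inv_le_comm₀ (by linarith) (by norm_num)]; linarith
  have hxt := ofDigits_le_inv_of_le_one (by omega) fun i => hx (i + 1)
  have hyt := ofDigits_le_inv_of_le_one (by omega) fun i => hy (i + 1)
  have hxt0 := ofDigits_nonneg fun i => x (i + 1)
  have hyt0 := ofDigits_nonneg fun i => y (i + 1)
  rw [ofDigits_eq_div x, ofDigits_eq_div y, div_left_inj' (by positivity)] at h
  have hxy : ((x 0 : ℕ) : ℝ) < (y 0 : ℕ) + 1 := by linarith
  have hyx : ((y 0 : ℕ) : ℝ) < (x 0 : ℕ) + 1 := by linarith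
  norm_cast at hxy hyx
  have head : x 0 = y 0 := Fin.ext (by omega)
  refine ⟨head, ?_⟩
  rw [head] at h
  linarith

theorem eq_of_ofDigits_eq_of_le_one (hb : 3 ≤ b) {x y : ℕ → Fin b} (hx : ∀ i, (x i : ℕ) ≤ 1)
    (hy : ∀ i, (y i : ℕ) ≤ 1) (h : ofDigits x = ofDigits y) : x = y := by
  funext n
  induction n generalizing x y with
  | zero => exact (head_eq_and_ofDigits_tail_eq_of_ofDigits_eq hb hx hy h).1
  | succ n ih =>
    exact ih (fun i => hx (i + 1)) (fun i => hy (i + 1))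
      (head_eq_and_ofDigits_tail_eq_of_ofDigits_eq hb hx hy h).2

end Real

section BinaryDigits

variable {q : ℕ} (hq : 2 ≤ q)

noncomputable def ofBinaryDigits (ω : ℕ → Fin 2) : ℝ :=
  Real.ofDigits fun i => Fin.castLE hq (ω i)

noncomputable def circleOfBinaryDigits (ω : ℕ → Fin 2) : Circle :=
  Circle.exp (2 * π * ofBinaryDigits hq ω)

lemma val_castLE_le_one (a : Fin 2) : (Fin.castLE hq a : ℕ) ≤ 1 := by
  simpa using Nat.le_of_lt_succ a.isLt

lemma ofBinaryDigits_nonneg (ω : ℕ → Fin 2) : 0 ≤ ofBinaryDigits hq ω :=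
  Real.ofDigits_nonneg _

lemma ofBinaryDigits_le (ω : ℕ → Fin 2) : ofBinaryDigits hq ω ≤ ((q : ℝ) - 1)⁻¹ :=
  Real.ofDigits_le_inv_of_le_one hq fun i => val_castLE_le_one hq (ω i)

lemma natCast_mul_ofBinaryDigits (ω : ℕ → Fin 2) :
    q * ofBinaryDigits hq ω = ω 0 + ofBinaryDigits hq fun i => ω (i + 1) := by
  rw [ofBinaryDigits, Real.ofDigits_eq_div, mul_div_cancel₀ _ (by positivity)]
  rfl

lemma ofBinaryDigits_injective (hq3 : 3 ≤ q) : Function.Injective (ofBinaryDigits hq) :=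
  fun ω ω' h => funext fun i => Fin.castLE_injective hq <| congrFun
    (Real.eq_of_ofDigits_eq_of_le_one hq3 (fun i => val_castLE_le_one hq (ω i))
      (fun i => val_castLE_le_one hq (ω' i)) h) i

lemma circleOfBinaryDigits_injective (hq3 : 3 ≤ q) :
    Function.Injective (circleOfBinaryDigits hq) := by
  have hmem (ω : ℕ → Fin 2) : 2 * π * ofBinaryDigits hq ω ∈ Set.Ico 0 (2 * π) := by
    have hq' : (3 : ℝ) ≤ q := by exact_mod_cast hq3
    have hX : ofBinaryDigits hq ω < 1 := (ofBinaryDigits_le hq ω).trans_lt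
      (inv_lt_one_of_one_lt₀ (by linarith))
    exact ⟨by have := ofBinaryDigits_nonneg hq ω; positivity, by nlinarith [pi_pos]⟩
  exact fun ω ω' h => ofBinaryDigits_injective hq hq3 <|
    mul_left_cancel₀ (by positivity : 2 * π ≠ 0) <|
      Circle.exp_injOn_Ico (by simp) (hmem ω) (hmem ω') h

lemma circleOfBinaryDigits_pow (ω : ℕ → Fin 2) :
    circleOfBinaryDigits hq ω ^ q = circleOfBinaryDigits hq fun i => ω (i + 1) := by
  rw [circleOfBinaryDigits, circleOfBinaryDigits, ← Circle.exp_natCast_mul, mul_left_comm,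
    natCast_mul_ofBinaryDigits, mul_add, Circle.exp_add,
    show Circle.exp (2 * π * ((ω 0 : ℕ) : ℝ)) = 1 by
      exact_mod_cast Circle.exp_two_pi_mul_int (ω 0 : ℕ), one_mul]

lemma measurable_ofBinaryDigits : Measurable (ofBinaryDigits hq) :=
  (show Continuous (ofBinaryDigits hq) from Real.continuous_ofDigits.comp (by fun_prop)).measurable

lemma measurable_circleOfBinaryDigits : Measurable (circleOfBinaryDigits hq) :=
  Circle.exp.continuous.measurable.comp ((measurable_ofBinaryDigits hq).const_mul _)

lemma natCast_mul_ofBinaryDigits_le_of_head_eq_zero {ω : ℕ → Fin 2} (h0 : ω 0 = 0) :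
    q * ofBinaryDigits hq ω ≤ ((q : ℝ) - 1)⁻¹ := by
  rw [natCast_mul_ofBinaryDigits, h0]
  simpa using ofBinaryDigits_le hq _

lemma re_coe_circleOfBinaryDigits_zpow (m : ℕ) (ω : ℕ → Fin 2) :
    ((circleOfBinaryDigits hq ω : ℂ) ^ (m : ℤ)).re = cos (m * (2 * π * ofBinaryDigits hq ω)) := by
  rw [zpow_natCast, ← Circle.coe_pow, circleOfBinaryDigits, ← Circle.exp_natCast_mul,
    Circle.coe_exp, Complex.exp_ofReal_mul_I_re]

lemma le_cos_natCast_mul_ofBinaryDigits (hq8 : 8 ≤ q) {m : ℕ} (hm : m ≤ q) (ω : ℕ → Fin 2) :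
    (if ω 0 = 0 then 1 / 2 else -1) ≤ cos (m * (2 * π * ofBinaryDigits hq ω)) := by
  split_ifs with h0
  · have hq' : (8 : ℝ) ≤ q := by exact_mod_cast hq8
    have hmX : m * ofBinaryDigits hq ω ≤ 1 / 7 := calc
      _ ≤ q * ofBinaryDigits hq ω := by have := ofBinaryDigits_nonneg hq ω; gcongr
      _ ≤ ((q : ℝ) - 1)⁻¹ := natCast_mul_ofBinaryDigits_le_of_head_eq_zero hq h0
      _ ≤ 1 / 7 := by rw [inv_le_comm₀ (by linarith) (by norm_num)]; linarith
    have hθ0 : 0 ≤ m * (2 * π * ofBinaryDigits hq ω) := by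
      have := ofBinaryDigits_nonneg hq ω; positivity
    have hθ1 : m * (2 * π * ofBinaryDigits hq ω) ≤ 1 := calc
      _ = 2 * π * (m * ofBinaryDigits hq ω) := by ring
      _ ≤ 2 * π * (1 / 7) := by gcongr
      _ ≤ 1 := by linarith [pi_lt_d2]
    nlinarith [one_sub_sq_div_two_le_cos (x := m * (2 * π * ofBinaryDigits hq ω))]
  · exact neg_one_le_cos _

end BinaryDigits

theorem sub_le_norm_fc_map_circleOfBinaryDigits {q : ℕ} (hq : 2 ≤ q) (hq8 : 8 ≤ q)
    (ν : Measure (Fin 2)) [IsProbabilityMeasure ν] {m : ℕ} (hm : m ≤ q) :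
    ν.real {0} / 2 - ν.real {1} ≤
      ‖fc ((Measure.infinitePi fun _ => ν).map (circleOfBinaryDigits hq)) m‖ := by
  set P := Measure.infinitePi fun _ : ℕ => ν
  set g : Fin 2 → ℝ := fun a => if a = 0 then 1 / 2 else -1
  have hF := measurable_circleOfBinaryDigits hq
  have hint : Integrable (fun ω => (circleOfBinaryDigits hq ω : ℂ) ^ (m : ℤ)) P :=
    .of_bound ((Circle.continuous_coe_zpow m).measurable.comp hF).aestronglyMeasurable 1
      (ae_of_all _ fun ω => by rw [norm_zpow, Circle.norm_coe, one_zpow])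
  have hg : Measurable fun ω : ℕ → Fin 2 => g (ω 0) :=
    (measurable_of_finite g).comp (measurable_pi_apply 0)
  have hgint : Integrable (fun ω : ℕ → Fin 2 => g (ω 0)) P :=
    .of_bound hg.aestronglyMeasurable 1 (ae_of_all _ fun ω => by
      by_cases h : ω 0 = 0 <;> norm_num [g, h])
  calc ν.real {0} / 2 - ν.real {1} = ∫ a, g a ∂ν := by
        rw [integral_fintype .of_finite, Fin.sum_univ_two]
        simp [g, sub_eq_add_neg, div_eq_mul_inv, mul_comm]
    _ = ∫ ω, g (ω 0) ∂P := by
        rw [← integral_map (measurable_pi_apply 0).aemeasurable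
          (measurable_of_finite g).aestronglyMeasurable,
          (measurePreserving_eval_infinitePi (fun _ => ν) 0).map_eq]
    _ ≤ ∫ ω, cos (m * (2 * π * ofBinaryDigits hq ω)) ∂P := by
        refine integral_mono hgint ?_ (le_cos_natCast_mul_ofBinaryDigits hq hq8 hm)
        simpa only [RCLike.re_to_complex, re_coe_circleOfBinaryDigits_zpow] using hint.re
    _ = (fc (P.map (circleOfBinaryDigits hq)) m).re := by
        rw [fc_map hF, ← RCLike.re_to_complex, ← integral_re hint]
        simp only [RCLike.re_to_complex, re_coe_circleOfBinaryDigits_zpow]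
    _ ≤ _ := Complex.re_le_norm _

noncomputable def biasedCoin : Measure (Fin 2) :=
  (PMF.ofFintype ![3 / 4, 1 / 4] (by
    rw [Fin.sum_univ_two, Matrix.cons_val_zero, Matrix.cons_val_one, Matrix.cons_val_zero,
      ENNReal.div_add_div_same]
    norm_num
    exact ENNReal.div_self (by norm_num) (by norm_num))).toMeasure

instance : IsProbabilityMeasure biasedCoin := by
  unfold biasedCoin; infer_instance

lemma biasedCoin_singleton (a : Fin 2) : biasedCoin {a} = ![3 / 4, 1 / 4] a :=
  PMF.toMeasure_apply_singleton _ _ (measurableSet_singleton a)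

lemma biasedCoin_singleton_le (a : Fin 2) : biasedCoin {a} ≤ 3 / 4 := by
  rw [biasedCoin_singleton]
  fin_cases a
  · exact le_rfl
  · exact ENNReal.div_le_div_right (by norm_num) 4

lemma biasedCoin_real_zero_div_two_sub_real_one :
    biasedCoin.real {0} / 2 - biasedCoin.real {1} = 1 / 8 := by
  norm_num [Measure.real, biasedCoin_singleton, ENNReal.toReal_div]

theorem lacunary_semigroup_measure (p : ℕ) (hp : 2 ≤ p) :
    ∃ μ : Measure Circle, IsProbabilityMeasure μ ∧
      (∀ z : Circle, μ {z} = 0) ∧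
      0 < ⨅ k : ℕ, ‖fc μ ((p : ℤ) ^ k)‖ := by
  have hq8 : 8 ≤ p ^ 3 := Nat.pow_le_pow_left hp 3
  have hq : 2 ≤ p ^ 3 := by omega
  set P := Measure.infinitePi fun _ : ℕ => biasedCoin
  have hF := measurable_circleOfBinaryDigits hq
  refine ⟨P.map (circleOfBinaryDigits hq), Measure.isProbabilityMeasure_map hF.aemeasurable,
    fun z => ?_, ?_⟩
  · have : NullSingletonClass P := nullSingletonClass_infinitePi biasedCoin
      ((ENNReal.div_lt_iff (by norm_num) (by norm_num)).2 (by norm_num)) biasedCoin_singleton_le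
    rw [Measure.map_apply hF (measurableSet_singleton z)]
    exact (Set.subsingleton_singleton.preimage
      (circleOfBinaryDigits_injective hq (by omega))).measure_zero P
  · have hinv := map_pow_map_eq_of_pow_eq_comp (measurePreserving_shift_infinitePi biasedCoin) hF
      (circleOfBinaryDigits_pow hq)
    refine (by norm_num : (0 : ℝ) < 1 / 8).trans_le (le_ciInf fun k => ?_)
    have hk : (p : ℤ) ^ k = ((p ^ 3 : ℕ) : ℤ) ^ (k / 3) * ((p ^ (k % 3) : ℕ) : ℤ) := by
      push_cast
      rw [← pow_mul, ← pow_add, Nat.div_add_mod]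
    rw [hk, fc_pow_mul_of_map_pow_eq hinv]
    exact biasedCoin_real_zero_div_two_sub_real_one ▸
      sub_le_norm_fc_map_circleOfBinaryDigits hq hq8 biasedCoin
        (Nat.pow_le_pow_right (by omega) (Nat.mod_lt k (by norm_num)).le)
end

section
/- Set m_k = 2^k and n_{k'} = k' for k, k' ≥ 0. Suppose μ is a Borel probability measure on 𝕋 such that μ̂(2^k k') → 1 as k → +∞ uniformly in k' ≥ 0. Then μ is not continuous, i.e., μ has an atom. -/
open MeasureTheory Filter Topology

/-!
Put `w = 2^{k₀}` with `|μ̂(w j) - 1| < 1/2` for all `j`. By dominated convergence, the Cesàro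
means of `j ↦ μ̂(w j) = ∫ (z^w)^j dμ` converge to `μ {z | z^w = 1}` (the Cesàro means of `c^j`
tend to `1` if `c = 1` and to `0` otherwise, for `|c| = 1`); this is Wiener's theorem for the
push-forward of `μ` under `z ↦ z^w`. All those means have real part at least `1/2`, so the finite
set of `w`-th roots of unity has positive measure, and one of its points is an atom.
-/

open Finset

section Cesaro

noncomputable def cesaroMean {E : Type*} [AddCommMonoid E] [Module ℝ E] (u : ℕ → E) (N : ℕ) : E :=
  (N : ℝ)⁻¹ • ∑ j ∈ range N, u j

lemma cesaroMean_const {E : Type*} [AddCommMonoid E] [Module ℝ E] (c : E) {N : ℕ} (hN : N ≠ 0) :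
    cesaroMean (fun _ => c) N = c := by
  rw [cesaroMean, sum_const, card_range, ← Nat.cast_smul_eq_nsmul ℝ, smul_smul,
    inv_mul_cancel₀ (Nat.cast_ne_zero.2 hN), one_smul]

variable {E : Type*} [NormedAddCommGroup E] [NormedSpace ℝ E]

lemma norm_cesaroMean_le {u : ℕ → E} {C : ℝ} (hC : 0 ≤ C) (hu : ∀ j, ‖u j‖ ≤ C) (N : ℕ) :
    ‖cesaroMean u N‖ ≤ C := by
  rcases N.eq_zero_or_pos with rfl | hN
  · simpa [cesaroMean] using hC
  calc ‖cesaroMean u N‖ ≤ (N : ℝ)⁻¹ * ∑ j ∈ range N, ‖u j‖ := by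
        rw [cesaroMean, norm_smul, Real.norm_of_nonneg (by positivity)]
        gcongr
        exact norm_sum_le _ _
    _ ≤ (N : ℝ)⁻¹ * (N * C) := by
        gcongr
        exact (sum_le_sum fun j _ => hu j).trans_eq (by simp)
    _ = C := by field_simp

lemma le_cesaroMean {u : ℕ → ℝ} {a : ℝ} (hu : ∀ j, a ≤ u j) {N : ℕ} (hN : N ≠ 0) :
    a ≤ cesaroMean u N := by
  rw [← cesaroMean_const a hN]
  exact smul_le_smul_of_nonneg_left (sum_le_sum fun j _ => hu j) (by positivity)

lemma Complex.re_cesaroMean (u : ℕ → ℂ) (N : ℕ) :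
    (cesaroMean u N).re = cesaroMean (fun j => (u j).re) N := by
  simp [cesaroMean, Complex.re_sum]

lemma integral_cesaroMean [CompleteSpace E] {α : Type*} [MeasurableSpace α] {μ : Measure α}
    {f : ℕ → α → E} (hf : ∀ j, Integrable (f j) μ) (N : ℕ) :
    ∫ x, cesaroMean (fun j => f j x) N ∂μ = cesaroMean (fun j => ∫ x, f j x ∂μ) N := by
  simp only [cesaroMean]
  rw [integral_smul, integral_finsetSum _ fun j _ => hf j]

variable {𝕜 : Type*} [NormedDivisionRing 𝕜] [NormedAlgebra ℝ 𝕜]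

lemma tendsto_cesaroMean_pow_of_ne_one {c : 𝕜} (hc : ‖c‖ ≤ 1) (hc₁ : c ≠ 1) :
    Tendsto (cesaroMean (c ^ ·)) atTop (𝓝 0) := by
  have hbound (N : ℕ) : ‖cesaroMean (c ^ ·) N‖ ≤ (N : ℝ)⁻¹ * (2 / ‖c - 1‖) := by
    rw [cesaroMean, geom_sum_eq hc₁, norm_smul, Real.norm_of_nonneg (by positivity), norm_div]
    gcongr
    calc ‖c ^ N - 1‖ ≤ ‖c‖ ^ N + ‖(1 : 𝕜)‖ := (norm_sub_le _ _).trans_eq (by rw [norm_pow])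
      _ ≤ 2 := by rw [norm_one]; linarith [pow_le_one₀ (norm_nonneg c) hc (n := N)]
  refine squeeze_zero_norm hbound ?_
  simpa using tendsto_inv_atTop_nhds_zero_nat.mul_const (2 / ‖c - 1‖)

open Classical in
lemma tendsto_cesaroMean_pow {c : 𝕜} (hc : ‖c‖ ≤ 1) :
    Tendsto (cesaroMean (c ^ ·)) atTop (𝓝 (if c = 1 then 1 else 0)) := by
  split_ifs with hc₁
  · subst hc₁
    refine tendsto_const_nhds.congr' ?_
    filter_upwards [eventually_ne_atTop 0] with N hN
    simpa using (cesaroMean_const (1 : 𝕜) hN).symm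
  · exact tendsto_cesaroMean_pow_of_ne_one hc hc₁

end Cesaro

lemma Complex.one_sub_norm_sub_one_le_re (z : ℂ) : 1 - ‖z - 1‖ ≤ z.re := by
  have h := Complex.re_le_norm (1 - z)
  rw [norm_sub_rev, Complex.sub_re, Complex.one_re] at h
  linarith

lemma Circle.finite_setOf_pow_eq_one {n : ℕ} (hn : 0 < n) : {z : Circle | z ^ n = 1}.Finite := by
  refine Set.Finite.of_finite_image ((Polynomial.nthRootsFinset n (1 : ℂ)).finite_toSet.subset ?_)
    Circle.coe_injective.injOn
  rintro _ ⟨z, hz, rfl⟩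
  exact (Polynomial.mem_nthRootsFinset hn 1).2 (by rw [← Circle.coe_pow, hz, Circle.coe_one])

lemma MeasureTheory.Measure.exists_measure_singleton_ne_zero {α : Type*} [MeasurableSpace α]
    {μ : Measure α} {s : Set α} (hs : s.Countable) (hμs : μ s ≠ 0) : ∃ x ∈ s, μ {x} ≠ 0 := by
  by_contra! hnull
  exact hμs (by simpa using (measure_biUnion_null_iff hs).2 hnull)

theorem tendsto_cesaroMean_fc_mul (μ : Measure Circle) [IsFiniteMeasure μ] (w : ℕ) :
    Tendsto (cesaroMean fun j : ℕ => fc μ (w * j)) atTop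
      (𝓝 (μ.real {z : Circle | z ^ w = 1} : ℂ)) := by
  set S := {z : Circle | z ^ w = 1}
  have hS : MeasurableSet S := (isClosed_eq (continuous_pow w) continuous_const).measurableSet
  have hfc (j : ℕ) : fc μ (w * j) = ∫ z : Circle, ((z : ℂ) ^ w) ^ j ∂μ := by
    simp only [fc, ← Nat.cast_mul, zpow_natCast, pow_mul]
  have hint (j : ℕ) : Integrable (fun z : Circle => ((z : ℂ) ^ w) ^ j) μ :=
    (by fun_prop : Continuous fun z : Circle => ((z : ℂ) ^ w) ^ j).integrable_of_hasCompactSupport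
      (HasCompactSupport.of_compactSpace _)
  have hmean : cesaroMean (fun j : ℕ => fc μ (w * j))
      = fun N => ∫ z, cesaroMean (fun j => ((z : ℂ) ^ w) ^ j) N ∂μ := by
    funext N
    rw [integral_cesaroMean hint]
    simp only [hfc]
  rw [hmean, ← mul_one (μ.real S : ℂ), ← Complex.real_smul, ← integral_indicator_const (1 : ℂ) hS]
  refine tendsto_integral_of_dominated_convergence (fun _ => 1) (fun N => ?_) (integrable_const 1)
    (fun N => ?_) (ae_of_all _ fun z => ?_)
  · exact (by unfold cesaroMean; fun_prop : Continuous fun z : Circle =>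
      cesaroMean (fun j => ((z : ℂ) ^ w) ^ j) N).aestronglyMeasurable
  · exact ae_of_all _ fun z => norm_cesaroMean_le zero_le_one (fun j => by simp [Circle.norm_coe]) N
  · have hz : ‖(z : ℂ) ^ w‖ ≤ 1 := by rw [norm_pow, Circle.norm_coe, one_pow]
    convert tendsto_cesaroMean_pow hz using 2
    by_cases hzw : z ^ w = 1
    · simp [S, hzw, ← Circle.coe_pow]
    · simp [S, hzw, ← Circle.coe_pow, Circle.coe_eq_one]

theorem uniform_convergence_not_continuous (μ : Measure Circle) [IsProbabilityMeasure μ]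
    (h : ∀ γ > (0 : ℝ), ∃ k₀ : ℕ, ∀ k : ℕ, k₀ ≤ k → ∀ k' : ℕ,
      ‖fc μ ((2 : ℤ) ^ k * (k' : ℤ)) - 1‖ < γ) :
    ∃ z : Circle, μ {z} ≠ 0 := by
  obtain ⟨k₀, hk₀⟩ := h (1 / 2) one_half_pos
  have hre (j : ℕ) : 1 / 2 ≤ (fc μ ((2 ^ k₀ : ℕ) * j)).re := by
    have hj := hk₀ k₀ le_rfl j
    push_cast
    linarith [Complex.one_sub_norm_sub_one_le_re (fc μ (2 ^ k₀ * j))]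
  have hroots : 1 / 2 ≤ μ.real {z : Circle | z ^ 2 ^ k₀ = 1} :=
    ge_of_tendsto ((Complex.continuous_re.tendsto _).comp (tendsto_cesaroMean_fc_mul μ _))
      (eventually_atTop.2 ⟨1, fun N hN => by
        simpa [Complex.re_cesaroMean] using le_cesaroMean hre (by omega)⟩)
  obtain ⟨z, -, hz⟩ := Measure.exists_measure_singleton_ne_zero
    (Circle.finite_setOf_pow_eq_one (Nat.two_pow_pos k₀)).countable
    ((measureReal_ne_zero_iff (measure_ne_top _ _)).1 (one_half_pos.trans_le hroots).ne')
  exact ⟨z, hz⟩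
end

section
/- Let (r_k)_{k≥0} be a sequence of positive integers with r_k → +∞. Let (n_l)_{l≥0} be the strictly increasing enumeration of the set {j·2^k : k ≥ 0, 1 ≤ j ≤ r_k}. Then n_{l+1}/n_l → 1 as l → +∞. -/
open Filter Topology

def dyadicMultiples (r : ℕ → ℕ) : Set ℕ :=
  {m : ℕ | ∃ k j : ℕ, 1 ≤ j ∧ j ≤ r k ∧ m = j * 2 ^ k}

/-- Round `x` up to a multiple of `2 ^ k`, where `2 ^ k` is the largest power of two that is at
most `x / M`: the step is at most `x / M`, and the multiplier is at most `2 * M`. -/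
lemma exists_mul_two_pow_mem_Ioc {M K x : ℕ} (hM : 0 < M) (hx : M * 2 ^ K ≤ x) :
    ∃ k j, K ≤ k ∧ 1 ≤ j ∧ j ≤ 2 * M ∧ j * 2 ^ k ∈ Set.Ioc x (x + x / M) := by
  have hxM : 2 ^ K ≤ x / M := (Nat.le_div_iff_mul_le hM).2 (by rwa [mul_comm])
  set k := Nat.log 2 (x / M)
  have hkK : K ≤ k := Nat.le_log_of_pow_le one_lt_two hxM
  have h2k : 2 ^ k ≤ x / M := Nat.pow_log_le_self 2 (lt_of_lt_of_le (by positivity) hxM).ne'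
  have hx2M : x < 2 * M * 2 ^ k := by
    have := (Nat.div_lt_iff_lt_mul hM).1 (Nat.lt_pow_succ_log_self one_lt_two (x / M))
    rw [pow_succ] at this
    linarith
  have hp : 0 < 2 ^ k := by positivity
  refine ⟨k, x / 2 ^ k + 1, hkK, le_add_self, (Nat.div_lt_iff_lt_mul hp).2 hx2M, ?_, ?_⟩
  · exact (Nat.div_lt_iff_lt_mul hp).1 (Nat.lt_succ_self _)
  · rw [add_mul, one_mul]
    exact add_le_add (Nat.div_mul_le_self x _) h2k

lemma eventually_exists_dyadicMultiples_mem_Ioc {r : ℕ → ℕ} (hr : Tendsto r atTop atTop)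
    {M : ℕ} (hM : 0 < M) :
    ∀ᶠ x in atTop, ∃ y ∈ dyadicMultiples r, y ∈ Set.Ioc x (x + x / M) := by
  obtain ⟨K, hK⟩ := eventually_atTop.mp (hr.eventually_ge_atTop (2 * M))
  filter_upwards [eventually_ge_atTop (M * 2 ^ K)] with x hx
  obtain ⟨k, j, hkK, hj1, hjM, hmem⟩ := exists_mul_two_pow_mem_Ioc hM hx
  exact ⟨j * 2 ^ k, ⟨k, j, hj1, hjM.trans (hK k hkK), rfl⟩, hmem⟩

lemma StrictMono.eventually_succ_le_add_div {n : ℕ → ℕ} (hn : StrictMono n) {M : ℕ}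
    (h : ∀ᶠ x in atTop, ∃ y ∈ Set.range n, y ∈ Set.Ioc x (x + x / M)) :
    ∀ᶠ l in atTop, n (l + 1) ≤ n l + n l / M := by
  filter_upwards [hn.tendsto_atTop.eventually h] with l ⟨_, ⟨l', rfl⟩, hlt, hle⟩
  exact (hn.monotone (Nat.succ_le_of_lt (hn.lt_iff_lt.1 hlt))).trans hle

lemma StrictMono.tendsto_succ_div_one {n : ℕ → ℕ} (hn : StrictMono n)
    (h : ∀ M : ℕ, 0 < M → ∀ᶠ x in atTop, ∃ y ∈ Set.range n, y ∈ Set.Ioc x (x + x / M)) :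
    Tendsto (fun l => (n (l + 1) : ℝ) / n l) atTop (𝓝 1) := by
  have hpos : ∀ᶠ l in atTop, (0 : ℝ) < n l := by
    filter_upwards [hn.tendsto_atTop.eventually_gt_atTop 0] with l hl
    exact_mod_cast hl
  refine tendsto_order.2 ⟨fun a ha => ?_, fun a ha => ?_⟩
  · filter_upwards [hpos] with l hl
    rw [lt_div_iff₀ hl]
    have : (n l : ℝ) < n (l + 1) := by exact_mod_cast hn (Nat.lt_succ_self l)
    nlinarith
  · obtain ⟨M, hM⟩ := exists_nat_one_div_lt (sub_pos.2 ha)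
    filter_upwards [hpos, hn.eventually_succ_le_add_div (h (M + 1) M.succ_pos)] with l hl hle
    rw [div_lt_iff₀ hl]
    calc (n (l + 1) : ℝ) ≤ n l + n l / (M + 1 : ℕ) :=
          (Nat.cast_le.2 hle).trans (by rw [Nat.cast_add]; exact add_le_add le_rfl Nat.cast_div_le)
      _ = (1 + 1 / ((M : ℝ) + 1)) * n l := by push_cast; ring
      _ < a * n l := by gcongr; linarith

theorem ratio_tendsto_one_general (r : ℕ → ℕ) (hrtop : Tendsto r atTop atTop)
    (n : ℕ → ℕ) (hn : StrictMono n)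
    (hrange : Set.range n = {m : ℕ | ∃ k j : ℕ, 1 ≤ j ∧ j ≤ r k ∧ m = j * 2 ^ k}) :
    Tendsto (fun l => (n (l + 1) : ℝ) / (n l : ℝ)) atTop (𝓝 1) := by
  refine hn.tendsto_succ_div_one fun M hM => ?_
  rw [hrange]
  exact eventually_exists_dyadicMultiples_mem_Ioc hrtop hM

theorem ratio_tendsto_one (r : ℕ → ℕ) (hr : ∀ k, 0 < r k) (hrtop : Tendsto r atTop atTop)
    (n : ℕ → ℕ) (hn : StrictMono n)
    (hrange : Set.range n = {m : ℕ | ∃ k j : ℕ, 1 ≤ j ∧ j ≤ r k ∧ m = j * 2 ^ k}) :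
    Tendsto (fun l => (n (l + 1) : ℝ) / (n l : ℝ)) atTop (𝓝 1) :=
  ratio_tendsto_one_general r hrtop n hn hrange
end
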